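/- The inverse of the Cartan matrix of an irreducible root system has all entries non-negative rational numbers, and N·C^{-1} has non-negative integer entries where N = det C. -/

import Mathlib

open scoped RealInnerProductSpace
open scoped Classical

/-- A reduced crystallographic root system of rank `n` in Euclidean `n`-space,
together with a chosen base of simple roots. -/
structure RootSystemData (n : ℕ) where
  R : Finset (EuclideanSpace ℝ (Fin n))
  nonzero : ∀ β ∈ R, β ≠ 0
  span_top : Submodule.span ℝ (R : Set (EuclideanSpace ℝ (Fin n))) = ⊤
  reflect_mem : ∀ α ∈ R, ∀ β ∈ R,
    β - ((2 * ⟪β, α⟫ / ⟪α, α⟫) • α) ∈ R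
  crystallographic : ∀ α ∈ R, ∀ β ∈ R, ∃ m : ℤ, 2 * ⟪β, α⟫ / ⟪α, α⟫ = (m : ℝ)
  reduced : ∀ α ∈ R, ∀ t : ℝ, t • α ∈ R → t = 1 ∨ t = -1
  simple : Fin n → EuclideanSpace ℝ (Fin n)
  simple_mem : ∀ i, simple i ∈ R
  simple_indep : LinearIndependent ℝ simple
  base : ∀ β ∈ R,
    (∃ c : Fin n → ℕ, β = ∑ i, (c i : ℝ) • simple i) ∨
    (∃ c : Fin n → ℕ, β = -∑ i, (c i : ℝ) • simple i)

namespace RootSystemData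

variable {n : ℕ} (D : RootSystemData n)

/-- The set of positive roots with respect to the base. -/
noncomputable def Pos : Finset (EuclideanSpace ℝ (Fin n)) :=
  D.R.filter (fun β => ∃ c : Fin n → ℕ, β = ∑ i, (c i : ℝ) • D.simple i)

/-- `μ` is a non-negative integral combination of the simple roots. -/
def NS (μ : EuclideanSpace ℝ (Fin n)) : Prop :=
  ∃ c : Fin n → ℕ, μ = ∑ i, (c i : ℝ) • D.simple i

/-- The root system is irreducible: the base cannot be split into two non-empty
mutually orthogonal parts. -/
def IsIrreducible : Prop :=
  ¬ ∃ s : Set (Fin n), s.Nonempty ∧ sᶜ.Nonempty ∧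
      ∀ i ∈ s, ∀ j ∈ sᶜ, ⟪D.simple i, D.simple j⟫ = 0

/-- The root system is of type `A₂`: rank two, with both Cartan integers equal to `-1`. -/
def IsA2 : Prop :=
  n = 2 ∧ ∀ i j : Fin n, i ≠ j →
    2 * ⟪D.simple j, D.simple i⟫ / ⟪D.simple i, D.simple i⟫ = -1

end RootSystemData
/-- The Cartan matrix of the root system: `C i j = ⟨α_j, α_i^∨⟩`. -/
noncomputable def RootSystemData.cartan {n : ℕ} (D : RootSystemData n) :
    Matrix (Fin n) (Fin n) ℝ :=
  fun i j => 2 * ⟪D.simple j, D.simple i⟫ / ⟪D.simple i, D.simple i⟫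

section Aux

open Matrix

/-- M-matrix key lemma: a positive definite real matrix with nonpositive off-diagonal
entries is inverse-nonnegative. -/
lemma aux_mmatrix_key {n : ℕ} {G : Matrix (Fin n) (Fin n) ℝ} (hG : G.PosDef)
    (hoff : ∀ i j, i ≠ j → G i j ≤ 0) (x : Fin n → ℝ)
    (hx : ∀ i, 0 ≤ G.mulVec x i) : ∀ i, 0 ≤ x i := by
  set u : Fin n → ℝ := fun i => max (x i) 0 with hu
  set v : Fin n → ℝ := fun i => max (-x i) 0 with hv
  have hxuv : x = u - v := by
    funext i
    simp only [hu, hv, Pi.sub_apply]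
    rcases le_total (x i) 0 with h | h
    · rw [max_eq_right h, max_eq_left (by linarith : (0:ℝ) ≤ -x i)]; ring
    · rw [max_eq_left h, max_eq_right (by linarith : -x i ≤ 0)]; ring
  have hv0 : v = 0 := by
    by_contra hne
    have hpos : 0 < dotProduct v (G.mulVec v) := by simpa using hG.dotProduct_mulVec_pos hne
    have h1 : 0 ≤ dotProduct v (G.mulVec x) :=
      Finset.sum_nonneg fun i _ => mul_nonneg (le_max_right _ _) (hx i)
    have h2 : dotProduct v (G.mulVec u) ≤ 0 := by
      apply Finset.sum_nonpos
      intro i _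
      rw [mulVec, dotProduct, Finset.mul_sum]
      apply Finset.sum_nonpos
      intro j _
      rcases eq_or_ne i j with rfl | hij
      · have huv : v i * u i = 0 := by
          simp only [hu, hv]
          rcases le_total (x i) 0 with h | h
          · rw [max_eq_right h]; ring
          · rw [max_eq_right (by linarith : -x i ≤ 0)]; ring
        calc v i * (G i i * u i) = G i i * (v i * u i) := by ring
        _ = 0 := by rw [huv, mul_zero]
        _ ≤ 0 := le_refl _
      · have : G i j * u j ≤ 0 :=
          mul_nonpos_of_nonpos_of_nonneg (hoff i j hij) (le_max_right _ _)
        exact mul_nonpos_of_nonneg_of_nonpos (le_max_right _ _) this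
    have hsplit : dotProduct v (G.mulVec x) =
        dotProduct v (G.mulVec u) - dotProduct v (G.mulVec v) := by
      rw [hxuv, mulVec_sub, dotProduct_sub]
    linarith
  intro i
  have h0 : max (-x i) 0 = 0 := congrFun hv0 i
  have : -x i ≤ 0 := by
    by_contra h
    push_neg at h
    rw [max_eq_left h.le] at h0; linarith
  linarith

/-- The Gram matrix of a linearly independent family is positive definite. -/
lemma aux_gram_posDef {n : ℕ} (α : Fin n → EuclideanSpace ℝ (Fin n))
    (hind : LinearIndependent ℝ α) :
    (Matrix.of fun i j => ⟪α i, α j⟫ : Matrix (Fin n) (Fin n) ℝ).PosDef := by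
  set G : Matrix (Fin n) (Fin n) ℝ := Matrix.of fun i j => ⟪α i, α j⟫ with hG
  have hquad : ∀ x : Fin n → ℝ,
      dotProduct x (G.mulVec x) = ⟪∑ i, x i • α i, ∑ j, x j • α j⟫ := by
    intro x
    rw [sum_inner]
    simp only [inner_sum, real_inner_smul_left, real_inner_smul_right]
    simp only [dotProduct, mulVec, dotProduct, hG, Matrix.of_apply, Finset.mul_sum]
    rw [Finset.sum_comm]
    exact Finset.sum_congr rfl fun i _ => Finset.sum_congr rfl fun j _ => by
      rw [real_inner_comm]; ring
  refine posDef_iff_dotProduct_mulVec.mpr ⟨?_, ?_⟩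
  · ext i j
    simp only [hG, conjTranspose_apply, Matrix.of_apply, star_trivial]
    exact real_inner_comm _ _
  · intro x hx
    have hv : (∑ i, x i • α i) ≠ 0 := by
      intro h
      exact hx (funext fun i => (Fintype.linearIndependent_iff.mp hind) x h i)
    have h0 : ⟪∑ i, x i • α i, ∑ j, x j • α j⟫ ≠ 0 := inner_self_ne_zero.mpr hv
    have := lt_of_le_of_ne real_inner_self_nonneg (Ne.symm h0)
    simpa [hquad x] using this

namespace RootSystemData
variable {n : ℕ} (D : RootSystemData n)

lemma aux_simple_norm_pos (i : Fin n) : 0 < ⟪D.simple i, D.simple i⟫ := by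
  have hne : D.simple i ≠ 0 := D.nonzero _ (D.simple_mem i)
  exact lt_of_le_of_ne real_inner_self_nonneg (Ne.symm (inner_self_ne_zero.mpr hne))

lemma aux_offdiag_nonpos {i j : Fin n} (hij : i ≠ j) :
    ⟪D.simple i, D.simple j⟫ ≤ 0 := by
  by_contra hpos
  push_neg at hpos
  obtain ⟨m, hm⟩ := D.crystallographic (D.simple i) (D.simple_mem i)
    (D.simple j) (D.simple_mem j)
  have hmr : (0:ℝ) < m := by
    rw [← hm]
    apply div_pos _ (D.aux_simple_norm_pos i)
    rw [real_inner_comm]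
    linarith
  have hγ : D.simple j - (m:ℝ) • D.simple i ∈ D.R := by
    have := D.reflect_mem (D.simple i) (D.simple_mem i) (D.simple j) (D.simple_mem j)
    rwa [hm] at this
  have hli := Fintype.linearIndependent_iff.mp D.simple_indep
  rcases D.base _ hγ with ⟨c, hc⟩ | ⟨c, hc⟩
  · set g : Fin n → ℝ :=
      fun k => (c k : ℝ) + (if k = i then (m:ℝ) else 0) - (if k = j then 1 else 0) with hg
    have hg0 : ∑ k, g k • D.simple k = 0 := by
      simp only [hg, add_smul, sub_smul, ite_smul, zero_smul, Finset.sum_add_distrib,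
        Finset.sum_sub_distrib, Finset.sum_ite_eq', Finset.mem_univ, if_true]
      rw [← hc]
      module
    have := hli g hg0 i
    simp only [hg, if_pos rfl, if_neg hij] at this
    norm_num at this
    have : (m:ℝ) = -(c i) := by linarith
    have : (0:ℝ) ≤ (c i : ℝ) := Nat.cast_nonneg _
    linarith
  · set g : Fin n → ℝ :=
      fun k => (c k : ℝ) - (if k = i then (m:ℝ) else 0) + (if k = j then 1 else 0) with hg
    have hg0 : ∑ k, g k • D.simple k = 0 := by
      simp only [hg, add_smul, sub_smul, ite_smul, zero_smul, Finset.sum_add_distrib,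
        Finset.sum_sub_distrib, Finset.sum_ite_eq', Finset.mem_univ, if_true]
      have hc' : (∑ k, (c k : ℝ) • D.simple k) = -(D.simple j - (m:ℝ) • D.simple i) := by
        have := congrArg Neg.neg hc
        simpa using this.symm
      rw [hc']
      module
    have := hli g hg0 j
    simp only [hg, if_pos rfl, if_neg (Ne.symm hij)] at this
    norm_num at this
    have h2 : (0:ℝ) ≤ (c j : ℝ) := Nat.cast_nonneg _
    linarith

end RootSystemData

end Aux

open Matrix in
/-- The inverse of the Cartan matrix of an irreducible root system has all entries
non-negative (rational) numbers, and `N • C⁻¹` has non-negative integer entries, where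
`N = det C`. -/
theorem cartan_inv_entries_nonneg_and_det_smul_inv_integral
    {n : ℕ} (D : RootSystemData n) (hirr : D.IsIrreducible) :
    (∀ i j, 0 ≤ D.cartan⁻¹ i j) ∧
    (∃ A : Matrix (Fin n) (Fin n) ℕ,
      D.cartan.det • D.cartan⁻¹ = fun i j => (A i j : ℝ)) := by
  set C : Matrix (Fin n) (Fin n) ℝ := D.cartan with hC
  set G : Matrix (Fin n) (Fin n) ℝ :=
    Matrix.of fun i j => ⟪D.simple i, D.simple j⟫ with hG
  have hGpd : G.PosDef := aux_gram_posDef D.simple D.simple_indep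
  have hGsymm : ∀ i j, G i j = G j i := fun i j => by
    simp only [hG, Matrix.of_apply]; exact real_inner_comm _ _
  have hdiag : ∀ i, 0 < G i i := fun i => D.aux_simple_norm_pos i
  have hGC : ∀ i j, G i j = (G i i / 2) * C i j := by
    intro i j
    have : C i j = 2 * G j i / G i i := rfl
    rw [this, hGsymm j i]
    field_simp
    have htwo : (2:ℝ) * G i i ≠ 0 := by have := hdiag i; positivity
    have h3 : G i i * (2 * G i j) = (2 * G i i) * G i j := by ring
    rw [mul_div_cancel_right₀ _ (hdiag i).ne']
  have hGoff : ∀ i j, i ≠ j → G i j ≤ 0 := fun i j hij => D.aux_offdiag_nonpos hij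
  -- determinant of C is positive
  have hdiagC : (Matrix.diagonal fun i => G i i / 2) * C = G := by
    ext i j
    rw [Matrix.diagonal_mul, hGC i j]
  have hdetG : 0 < G.det := hGpd.det_pos
  have hdetD : 0 < (Matrix.diagonal fun i : Fin n => G i i / 2).det := by
    rw [Matrix.det_diagonal]
    exact Finset.prod_pos fun i _ => by have := hdiag i; linarith
  have hdetC : 0 < C.det := by
    have h := congrArg Matrix.det hdiagC
    rw [Matrix.det_mul] at h
    by_contra hle
    push_neg at hle
    nlinarith
  have hUnit : IsUnit C.det := hdetC.ne'.isUnit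
  have hmul : C * C⁻¹ = 1 := Matrix.mul_nonsing_inv C hUnit
  -- nonnegativity of entries of C⁻¹
  have hinv_nonneg : ∀ i j, 0 ≤ C⁻¹ i j := by
    intro i j
    set x : Fin n → ℝ := fun k => C⁻¹ k j with hx
    have hCx : ∀ k, C.mulVec x k = (1 : Matrix (Fin n) (Fin n) ℝ) k j := by
      intro k
      rw [← hmul]
      simp [Matrix.mulVec, Matrix.mul_apply, dotProduct, hx]
    have hGx : ∀ k, 0 ≤ G.mulVec x k := by
      intro k
      have : G.mulVec x k = (G k k / 2) * C.mulVec x k := by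
        simp only [Matrix.mulVec, dotProduct, Finset.mul_sum]
        exact Finset.sum_congr rfl fun l _ => by rw [hGC k l]; ring
      rw [this, hCx k]
      rcases eq_or_ne k j with rfl | hkj
      · simp only [Matrix.one_apply_eq]
        have := hdiag k; positivity
      · simp [Matrix.one_apply_ne hkj]
    exact aux_mmatrix_key hGpd hGoff x hGx i
  refine ⟨hinv_nonneg, ?_⟩
  -- integrality
  set Cz : Matrix (Fin n) (Fin n) ℤ := fun i j =>
    Classical.choose (D.crystallographic (D.simple i) (D.simple_mem i)
      (D.simple j) (D.simple_mem j)) with hCz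
  have hCCz : C = (Int.castRingHom ℝ).mapMatrix Cz := by
    ext i j
    exact Classical.choose_spec (D.crystallographic (D.simple i) (D.simple_mem i)
      (D.simple j) (D.simple_mem j))
  have hadj : C.adjugate = (Int.castRingHom ℝ).mapMatrix Cz.adjugate := by
    rw [hCCz, (Int.castRingHom ℝ).map_adjugate]
  have hsmul : C.det • C⁻¹ = C.adjugate := by
    rw [Matrix.inv_def, smul_smul, Ring.inverse_eq_inv,
      mul_inv_cancel₀ hdetC.ne', one_smul]
  have hadj_nonneg : ∀ i j, 0 ≤ Cz.adjugate i j := by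
    intro i j
    have h1 : (0:ℝ) ≤ C.det • C⁻¹ i j := mul_nonneg hdetC.le (hinv_nonneg i j)
    have h2 : (C.det • C⁻¹) i j = ((Cz.adjugate i j : ℤ) : ℝ) := by
      rw [hsmul, hadj]; rfl
    have : (0:ℝ) ≤ ((Cz.adjugate i j : ℤ) : ℝ) := by
      rw [← h2]; exact h1
    exact_mod_cast this
  refine ⟨fun i j => (Cz.adjugate i j).toNat, ?_⟩
  funext i j
  have h2 : (C.det • C⁻¹) i j = ((Cz.adjugate i j : ℤ) : ℝ) := by
    rw [hsmul, hadj]; rfl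
  rw [h2]
  norm_cast
  exact (Int.toNat_of_nonneg (hadj_nonneg i j)).symm
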